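/- For integer M ≥ 2, nonnegative integer n, and real ν with 0 < ν < M, the terminating hypergeometric evaluation ₂F₁(-n, n+M-1; M-ν/2; 1) = (-ν/2 - n + 1)_n / (M - ν/2)_n holds, and consequently ∫_0^∞ u^{ν-1} ξ^{(ν,M)}_{n,0}(u) du = (-1)^n π^{M/2} Γ(ν/2+n)/Γ(M-ν/2+n) · sqrt((n+(M-1)/2) Γ(n+M-1)/n!). -/

import Mathlib

/-! Expanding `₂F₂` termwise, the monomial `z^k` contributes
`∫₀^∞ u^{ν-1} ∫₀^∞ e^{-z-u²/z} z^{s+k} dz du` with `s = (M-ν)/2 - 1`. Since `u²/z ≥ u - z/2`,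
the integrand is dominated by `u^{ν-1}e^{-u} · z^{s+k}e^{-z/2}`, so Fubini applies: the
`u`-integral is the Gaussian moment `z^{ν/2} Γ(ν/2)/2` and the remaining `z`-integral is
`Γ(M/2 + k) = Γ(M/2) (M/2)_k`. The Pochhammer factor cancels the lower parameter `M/2` of `₂F₂`,
leaving `Γ(ν/2) Γ(M/2)/2 · ₂F₁(-n, n+M-1; M-ν/2; 1)`, which Chu–Vandermonde evaluates; the
reflection `(1-a-n)_n = (-1)^n (a)_n` produces the sign. -/

open Finset

/-- Pochhammer (rising factorial) `(a)_k`. -/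
noncomputable def poch (a : ℝ) (k : ℕ) : ℝ := ∏ i ∈ Finset.range k, (a + i)

/-- Terminating Gauss hypergeometric series `₂F₁(-n, b; c; x)`. -/
noncomputable def F21fin (n : ℕ) (b c x : ℝ) : ℝ :=
  ∑ k ∈ Finset.range (n + 1),
    poch (-(n : ℝ)) k * poch b k / (poch c k * k.factorial) * x ^ k

/-- Terminating generalized hypergeometric series `₂F₂(-n, b; c, d; z)`. -/
noncomputable def F22fin (n : ℕ) (b c d z : ℝ) : ℝ :=
  ∑ k ∈ Finset.range (n + 1),
    poch (-(n : ℝ)) k * poch b k / (poch c k * poch d k * k.factorial) * z ^ k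

/-- The functions `ξ^{(ν,M)}_{n,l}(u)` (complex-valued because of the factor `i^l`). -/
noncomputable def xi (ν : ℝ) (M n l : ℕ) (u : ℝ) : ℂ :=
  Complex.I ^ l *
    ((2 * Real.pi ^ ((M : ℝ) / 2) * u ^ l /
          (Real.Gamma ((l : ℝ) + M / 2) * Real.Gamma ((l : ℝ) + M - ν / 2)) *
        Real.sqrt (((n : ℝ) + l + ((M : ℝ) - 1) / 2) *
          Real.Gamma ((n : ℝ) + 2 * l + M - 1) / n.factorial) *
        ∫ z in Set.Ioi (0 : ℝ),
          Real.exp (-z - u ^ 2 / z) * z ^ (((M : ℝ) - ν) / 2 - 1) *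
            F22fin n ((n : ℝ) + 2 * l + M - 1) ((l : ℝ) + M / 2)
              ((l : ℝ) + M - ν / 2) z : ℝ) : ℂ)


open Real Set MeasureTheory Polynomial

lemma poch_succ (a : ℝ) (k : ℕ) : poch a (k + 1) = poch a k * (a + k) :=
  prod_range_succ _ k

lemma poch_eq_smeval_ascPochhammer (a : ℝ) (k : ℕ) :
    poch a k = (ascPochhammer ℕ k).smeval a := by
  induction k with
  | zero => simp [poch]
  | succ k ih =>
    rw [poch_succ, ih, ascPochhammer_succ_right, smeval_mul, smeval_add, smeval_X, smeval_natCast]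
    simp

lemma poch_pos {a : ℝ} (ha : 0 < a) (k : ℕ) : 0 < poch a k :=
  prod_pos fun i _ => add_pos_of_pos_of_nonneg ha i.cast_nonneg

lemma poch_add (a : ℝ) (m k : ℕ) : poch a (m + k) = poch a m * poch (a + m) k := by
  simp only [poch, prod_range_add, Nat.cast_add, add_assoc]

lemma Gamma_add_nat_eq_mul_poch {a : ℝ} (ha : 0 < a) (k : ℕ) :
    Gamma (a + k) = Gamma a * poch a k := by
  induction k with
  | zero => simp [poch]
  | succ k ih =>
    rw [Nat.cast_succ, ← add_assoc, Gamma_add_one (by positivity), ih, poch_succ]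
    ring

lemma poch_eq_smeval_descPochhammer (a : ℝ) (k : ℕ) :
    poch a k = (descPochhammer ℤ k).smeval (a + k - 1) := by
  rw [descPochhammer_smeval_eq_ascPochhammer, poch_eq_smeval_ascPochhammer]
  ring_nf

lemma neg_one_pow_mul_poch (a : ℝ) (k : ℕ) :
    (-1) ^ k * poch a k = (descPochhammer ℤ k).smeval (-a) := by
  rw [poch_eq_smeval_ascPochhammer, ← neg_neg a, ascPochhammer_smeval_neg_eq_descPochhammer,
    neg_neg, Units.smul_def, Int.coe_negOnePow_natCast, zsmul_eq_mul, ← mul_assoc]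
  simp [← mul_pow]

lemma poch_neg_nat (n k : ℕ) : poch (-n) k = (-1) ^ k * n.descFactorial k := by
  rw [← descPochhammer_smeval_eq_descFactorial, ← neg_neg (n : ℝ), ← neg_one_pow_mul_poch,
    ← mul_assoc, ← mul_pow]
  simp

lemma poch_sub_nat_sub_add_one (a : ℝ) (n : ℕ) : poch (-a - n + 1) n = (-1) ^ n * poch a n := by
  rw [poch_eq_smeval_descPochhammer, neg_one_pow_mul_poch]
  ring_nf

/-- Chu–Vandermonde, read off from `descPochhammer_smeval_add` at `r = -b`, `s = c + n - 1`. -/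
lemma sum_choose_mul_poch_mul_poch (n : ℕ) (b c : ℝ) :
    ∑ k ∈ range (n + 1), (-1) ^ k * n.choose k * poch b k * poch (c + k) (n - k)
      = poch (c - b) n := by
  rw [poch_eq_smeval_descPochhammer, show c - b + n - 1 = -b + (c + n - 1) by ring,
    Ring.descPochhammer_smeval_add n (Commute.all _ _), Nat.sum_antidiagonal_eq_sum_range_succ
      (fun i j => (n.choose i : ℝ) * ((descPochhammer ℤ i).smeval (-b) *
        (descPochhammer ℤ j).smeval (c + n - 1)))]
  refine sum_congr rfl fun k hk => ?_
  have hkn : k ≤ n := Nat.lt_succ_iff.mp (mem_range.mp hk)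
  rw [← neg_one_pow_mul_poch, poch_eq_smeval_descPochhammer (c + k), Nat.cast_sub hkn]
  ring_nf

lemma F21fin_one {c : ℝ} (n : ℕ) (b : ℝ) (hc : poch c n ≠ 0) :
    F21fin n b c 1 = poch (c - b) n / poch c n := by
  rw [eq_div_iff hc, F21fin, sum_mul, ← sum_choose_mul_poch_mul_poch]
  refine sum_congr rfl fun k hk => ?_
  have hkn : k ≤ n := Nat.lt_succ_iff.mp (mem_range.mp hk)
  have hsplit : poch c n = poch c k * poch (c + k) (n - k) := by
    rw [← poch_add, Nat.add_sub_cancel' hkn]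
  have hck : poch c k ≠ 0 := left_ne_zero_of_mul (hsplit ▸ hc)
  rw [hsplit, poch_neg_nat, Nat.descFactorial_eq_factorial_mul_choose, one_pow, mul_one]
  push_cast
  field_simp

lemma sum_F22fin_coeff_mul_Gamma {a : ℝ} (ha : 0 < a) (n : ℕ) (b c : ℝ) :
    ∑ k ∈ range (n + 1), poch (-n) k * poch b k / (poch a k * poch c k * k.factorial) *
      Gamma (a + k) = Gamma a * F21fin n b c 1 := by
  rw [F21fin, mul_sum]
  refine sum_congr rfl fun k _ => ?_
  have hak : poch a k ≠ 0 := (poch_pos ha k).ne'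
  rw [Gamma_add_nat_eq_mul_poch ha, one_pow, mul_one]
  field_simp

/-- `2 u^{s+1} K_{s+1}(2u)`, where `K` is the modified Bessel function of the second kind. -/
noncomputable def besselIntegral (s u : ℝ) : ℝ :=
  ∫ z in Ioi 0, exp (-z - u ^ 2 / z) * z ^ s

lemma neg_sub_sq_div_le {u z : ℝ} (hz : 0 < z) : -z - u ^ 2 / z ≤ -u - z / 2 := by
  have : u - z / 2 ≤ u ^ 2 / z := by
    rw [le_div_iff₀ hz]
    nlinarith [sq_nonneg (u - z)]
  linarith

lemma integrableOn_exp_mul_rpow {s : ℝ} (hs : -1 < s) (u : ℝ) :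
    IntegrableOn (fun z => exp (-z - u ^ 2 / z) * z ^ s) (Ioi 0) := by
  refine (integrableOn_rpow_mul_exp_neg_mul_rpow hs one_pos one_pos).mono' ?_ ?_
  · exact ((measurable_id.neg.sub ((measurable_const.pow measurable_const).div
      measurable_id)).exp.mul (measurable_id.pow measurable_const)).aestronglyMeasurable
  · filter_upwards [ae_restrict_mem measurableSet_Ioi] with z (hz : 0 < z)
    rw [norm_of_nonneg (by positivity), rpow_one, mul_comm]
    gcongr
    have : 0 ≤ u ^ 2 / z := by positivity
    linarith

lemma integrable_rpow_mul_exp_mul_rpow {ν s : ℝ} (hν : 0 < ν) (hs : -1 < s) :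
    Integrable (Function.uncurry fun u z : ℝ => u ^ (ν - 1) * (exp (-z - u ^ 2 / z) * z ^ s))
      ((volume.restrict (Ioi 0)).prod (volume.restrict (Ioi 0))) := by
  have hu : IntegrableOn (fun u : ℝ => exp (-u) * u ^ (ν - 1)) (Ioi 0) :=
    GammaIntegral_convergent hν
  have hz : IntegrableOn (fun z : ℝ => z ^ s * exp (-(1 / 2) * z)) (Ioi 0) := by
    simpa only [rpow_one] using
      integrableOn_rpow_mul_exp_neg_mul_rpow hs one_pos (by norm_num : (0 : ℝ) < 1 / 2)
  refine (hu.mul_prod hz).mono' ?_ ?_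
  · exact ((measurable_fst.pow measurable_const).mul
      (((measurable_snd.neg.sub ((measurable_fst.pow measurable_const).div
        measurable_snd)).exp).mul (measurable_snd.pow measurable_const))).aestronglyMeasurable
  · rw [Measure.prod_restrict]
    filter_upwards [ae_restrict_mem (measurableSet_Ioi.prod measurableSet_Ioi)]
      with p ⟨(hp1 : 0 < p.1), (hp2 : 0 < p.2)⟩
    rw [Function.uncurry, norm_of_nonneg (by positivity)]
    calc p.1 ^ (ν - 1) * (exp (-p.2 - p.1 ^ 2 / p.2) * p.2 ^ s)
        ≤ p.1 ^ (ν - 1) * (exp (-p.1 - p.2 / 2) * p.2 ^ s) := by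
          gcongr p.1 ^ (ν - 1) * (?_ * _)
          exact exp_le_exp.mpr (neg_sub_sq_div_le hp2)
      _ = exp (-p.1) * p.1 ^ (ν - 1) * (p.2 ^ s * exp (-(1 / 2) * p.2)) := by
          rw [show -p.1 - p.2 / 2 = -p.1 + -(1 / 2) * p.2 by ring, exp_add]
          ring

lemma integral_rpow_mul_exp_neg_sq_div {ν z : ℝ} (hν : 0 < ν) (hz : 0 < z) :
    ∫ u in Ioi 0, u ^ (ν - 1) * exp (-u ^ 2 / z) = z ^ (ν / 2) * Gamma (ν / 2) / 2 := by
  calc ∫ u in Ioi 0, u ^ (ν - 1) * exp (-u ^ 2 / z)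
      = ∫ u in Ioi 0, u ^ (ν - 1) * exp (-z⁻¹ * u ^ (2 : ℝ)) := by
        refine setIntegral_congr_fun measurableSet_Ioi fun u _ => ?_
        rw [rpow_two, neg_div, div_eq_inv_mul, neg_mul]
    _ = z⁻¹ ^ (-(ν - 1 + 1) / 2) * (1 / 2) * Gamma ((ν - 1 + 1) / 2) :=
        integral_rpow_mul_exp_neg_mul_rpow two_pos (by linarith) (inv_pos.mpr hz)
    _ = z ^ (ν / 2) * Gamma (ν / 2) / 2 := by
        rw [sub_add_cancel, neg_div, inv_rpow hz.le, rpow_neg hz.le, inv_inv]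
        ring

lemma integral_rpow_mul_besselIntegral {ν s : ℝ} (hν : 0 < ν) (hs : -1 < s) :
    ∫ u in Ioi 0, u ^ (ν - 1) * besselIntegral s u
      = Gamma (ν / 2) * Gamma (s + ν / 2 + 1) / 2 := by
  simp only [besselIntegral, ← integral_const_mul]
  rw [integral_integral_swap (integrable_rpow_mul_exp_mul_rpow hν hs)]
  have hinner : ∀ z ∈ Ioi (0 : ℝ),
      ∫ u in Ioi 0, u ^ (ν - 1) * (exp (-z - u ^ 2 / z) * z ^ s)
        = Gamma (ν / 2) / 2 * (exp (-z) * z ^ (s + ν / 2)) := by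
    intro z (hz : 0 < z)
    have hsplit : ∀ u : ℝ, u ^ (ν - 1) * (exp (-z - u ^ 2 / z) * z ^ s)
        = exp (-z) * z ^ s * (u ^ (ν - 1) * exp (-u ^ 2 / z)) := fun u => by
      rw [show -z - u ^ 2 / z = -z + -u ^ 2 / z by ring, exp_add]
      ring
    simp only [hsplit]
    rw [integral_const_mul, integral_rpow_mul_exp_neg_sq_div hν hz, rpow_add hz]
    ring
  rw [setIntegral_congr_fun measurableSet_Ioi hinner, integral_const_mul,
    Gamma_eq_integral (by linarith : 0 < s + ν / 2 + 1), add_sub_cancel_right]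
  ring

lemma integrableOn_rpow_mul_besselIntegral {ν s : ℝ} (hν : 0 < ν) (hs : -1 < s) :
    IntegrableOn (fun u => u ^ (ν - 1) * besselIntegral s u) (Ioi 0) := by
  rw [IntegrableOn]
  simpa only [besselIntegral, ← integral_const_mul, Function.uncurry_apply_pair] using
    (integrable_rpow_mul_exp_mul_rpow hν hs).integral_prod_left

lemma integral_exp_mul_rpow_mul_sum {s : ℝ} (hs : -1 < s) (u : ℝ) (a : ℕ → ℝ) (N : ℕ) :
    ∫ z in Ioi 0, exp (-z - u ^ 2 / z) * z ^ s * ∑ k ∈ range N, a k * z ^ k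
      = ∑ k ∈ range N, a k * besselIntegral (s + k) u := by
  have hterm : ∀ z ∈ Ioi (0 : ℝ), exp (-z - u ^ 2 / z) * z ^ s * ∑ k ∈ range N, a k * z ^ k
      = ∑ k ∈ range N, a k * (exp (-z - u ^ 2 / z) * z ^ (s + k)) := fun z (hz : 0 < z) => by
    simp only [mul_sum, rpow_add hz, rpow_natCast]
    exact sum_congr rfl fun k _ => by ring
  have hk : ∀ k : ℕ, -1 < s + k := fun k => by linarith [k.cast_nonneg (α := ℝ)]
  rw [setIntegral_congr_fun measurableSet_Ioi hterm,
    integral_finsetSum _ fun k _ => (integrableOn_exp_mul_rpow (hk k) u).const_mul (a k)]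
  simp only [integral_const_mul, besselIntegral]

lemma integral_rpow_mul_sum_besselIntegral {ν s : ℝ} (hν : 0 < ν) (hs : -1 < s)
    (a : ℕ → ℝ) (N : ℕ) :
    ∫ u in Ioi 0, u ^ (ν - 1) * ∑ k ∈ range N, a k * besselIntegral (s + k) u
      = Gamma (ν / 2) / 2 * ∑ k ∈ range N, a k * Gamma (s + ν / 2 + 1 + k) := by
  have hk : ∀ k : ℕ, -1 < s + k := fun k => by linarith [k.cast_nonneg (α := ℝ)]
  simp only [mul_sum, mul_left_comm (_ ^ (ν - 1)) (a _)]
  rw [integral_finsetSum _ fun k _ => (integrableOn_rpow_mul_besselIntegral hν (hk k)).const_mul _]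
  refine sum_congr rfl fun k _ => ?_
  rw [integral_const_mul, integral_rpow_mul_besselIntegral hν (hk k)]
  ring_nf

lemma integral_rpow_mul_integral_F22fin {ν s a : ℝ} (hν : 0 < ν) (hs : -1 < s)
    (ha : s + ν / 2 + 1 = a) (n : ℕ) (b c : ℝ) :
    ∫ u in Ioi 0, u ^ (ν - 1) * ∫ z in Ioi 0, exp (-z - u ^ 2 / z) * z ^ s * F22fin n b a c z
      = Gamma (ν / 2) * Gamma a / 2 * F21fin n b c 1 := by
  simp only [F22fin, integral_exp_mul_rpow_mul_sum hs]
  rw [integral_rpow_mul_sum_besselIntegral hν hs, ha,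
    sum_F22fin_coeff_mul_Gamma (by linarith : 0 < a)]
  ring

lemma xi_zero (ν : ℝ) (M n : ℕ) (u : ℝ) :
    xi ν M n 0 u = ((2 * π ^ ((M : ℝ) / 2) / (Gamma ((M : ℝ) / 2) * Gamma (M - ν / 2)) *
      √((n + ((M : ℝ) - 1) / 2) * Gamma (n + M - 1) / n.factorial) *
      ∫ z in Ioi 0, exp (-z - u ^ 2 / z) * z ^ (((M : ℝ) - ν) / 2 - 1) *
        F22fin n (n + M - 1) ((M : ℝ) / 2) (M - ν / 2) z : ℝ) : ℂ) := by
  simp [xi]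

theorem stmt11_general (M : ℕ) (n : ℕ) (ν : ℝ) (hν0 : 0 < ν) (hνM : ν < M) :
    F21fin n ((n : ℝ) + M - 1) ((M : ℝ) - ν / 2) 1 =
        poch (-(ν / 2) - n + 1) n / poch ((M : ℝ) - ν / 2) n ∧
      ∫ u in Set.Ioi (0 : ℝ), (u ^ (ν - 1) : ℝ) • xi ν M n 0 u =
        (((-1 : ℝ) ^ n * Real.pi ^ ((M : ℝ) / 2) * Real.Gamma (ν / 2 + n) /
            Real.Gamma ((M : ℝ) - ν / 2 + n) *
            Real.sqrt (((n : ℝ) + ((M : ℝ) - 1) / 2) * Real.Gamma ((n : ℝ) + M - 1) /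
              n.factorial) : ℝ) : ℂ) := by
  have hc : 0 < (M : ℝ) - ν / 2 := by linarith
  have hF21 : F21fin n ((n : ℝ) + M - 1) ((M : ℝ) - ν / 2) 1 =
      poch (-(ν / 2) - n + 1) n / poch ((M : ℝ) - ν / 2) n := by
    rw [F21fin_one n _ (poch_pos hc n).ne']
    ring_nf
  refine ⟨hF21, ?_⟩
  simp only [xi_zero, Complex.real_smul, ← Complex.ofReal_mul]
  rw [integral_complex_ofReal]
  congr 1
  set C := 2 * π ^ ((M : ℝ) / 2) / (Gamma ((M : ℝ) / 2) * Gamma (M - ν / 2)) *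
    √((n + ((M : ℝ) - 1) / 2) * Gamma (n + M - 1) / n.factorial) with hC
  simp only [mul_left_comm _ C]
  rw [integral_const_mul, integral_rpow_mul_integral_F22fin hν0 (by linarith) (by ring), hF21,
    poch_sub_nat_sub_add_one, Gamma_add_nat_eq_mul_poch (by linarith), Gamma_add_nat_eq_mul_poch hc]
  have hΓa : Gamma ((M : ℝ) / 2) ≠ 0 := (Gamma_pos_of_pos (by linarith)).ne'
  have hΓc : Gamma ((M : ℝ) - ν / 2) ≠ 0 := (Gamma_pos_of_pos hc).ne'
  have hpc : poch ((M : ℝ) - ν / 2) n ≠ 0 := (poch_pos hc n).ne'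
  rw [hC]
  field_simp

theorem stmt11 (M : ℕ) (hM : 2 ≤ M) (n : ℕ) (ν : ℝ) (hν0 : 0 < ν) (hνM : ν < M) :
    F21fin n ((n : ℝ) + M - 1) ((M : ℝ) - ν / 2) 1 =
        poch (-(ν / 2) - n + 1) n / poch ((M : ℝ) - ν / 2) n ∧
      ∫ u in Set.Ioi (0 : ℝ), (u ^ (ν - 1) : ℝ) • xi ν M n 0 u =
        (((-1 : ℝ) ^ n * Real.pi ^ ((M : ℝ) / 2) * Real.Gamma (ν / 2 + n) /
            Real.Gamma ((M : ℝ) - ν / 2 + n) *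
            Real.sqrt (((n : ℝ) + ((M : ℝ) - 1) / 2) * Real.Gamma ((n : ℝ) + M - 1) /
              n.factorial) : ℝ) : ℂ) :=
  stmt11_general M n ν hν0 hνM
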